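/- (Conservative variance estimation) Define V̂ = (1/N²)∑_{i=1}^N 1_{A_i}(1−π_i)(y_i/π_i)² + (1/N²)∑_{i=1}^N ∑_{j≠i, π_{ij}>0} 1_{A_i ∩ A_j} ((π_{ij} − π_i π_j)/π_{ij}) (y_i/π_i)(y_j/π_j) and Â = (1/N²)∑_{i=1}^N ∑_{j≠i, π_{ij}=0} [1_{A_i} y_i²/(2π_i) + 1_{A_j} y_j²/(2π_j)]. Then the estimator V̂ + Â is conservative: E[V̂ + Â] ≥ Var(Ŷ). -/

import Mathlib

/-! Write `wᵢ = yᵢ / πᵢ`. Then `Var Ŷ = N⁻² ∑_{i,j} (P(Aᵢ ∩ Aⱼ) - πᵢπⱼ) wᵢwⱼ`, and inverse-probability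
weighting makes `E V̂` reproduce exactly the diagonal terms and the terms with `πᵢⱼ > 0`. The pairs
left over have `πᵢⱼ = 0`, so they contribute `-yᵢyⱼ ≤ (yᵢ² + yⱼ²) / 2`, which is the expectation
of the corresponding summand of `Â`. -/

open MeasureTheory ProbabilityTheory Finset

section IndicatorVariance

variable {Ω ι : Type*} [MeasurableSpace Ω] {P : Measure Ω}

lemma memLp_indicator_one [IsFiniteMeasure P] {s : Set Ω} (hs : MeasurableSet s) (p : ENNReal) :
    MemLp (s.indicator (1 : Ω → ℝ)) p P :=
  memLp_indicator_const p hs 1 (.inr (measure_ne_top _ _))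

variable [IsProbabilityMeasure P]

lemma covariance_indicator_one {s t : Set Ω} (hs : MeasurableSet s) (ht : MeasurableSet t) :
    cov[s.indicator 1, t.indicator 1; P] = P.real (s ∩ t) - P.real s * P.real t := by
  rw [covariance_eq_sub (memLp_indicator_one hs 2) (memLp_indicator_one ht 2),
    ← Set.inter_indicator_one]
  simp [integral_indicator_one, hs, ht, hs.inter ht]

lemma variance_sum_indicator_mul [Fintype ι] {A : ι → Set Ω} (hA : ∀ i, MeasurableSet (A i))
    (w : ι → ℝ) :
    Var[fun ω ↦ ∑ i, (A i).indicator 1 ω * w i; P]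
      = ∑ i, ∑ j, (P.real (A i ∩ A j) - P.real (A i) * P.real (A j)) * w i * w j := by
  rw [variance_fun_sum fun i ↦ (memLp_indicator_one (hA i) 2).mul_const (w i)]
  refine sum_congr rfl fun i _ ↦ sum_congr rfl fun j _ ↦ ?_
  rw [covariance_mul_const_left, covariance_mul_const_right, covariance_indicator_one (hA i) (hA j)]
  ring

end IndicatorVariance

lemma sum_erase_eq_sum_filter_pos_add_sum_filter_zero {ι : Type*} [Fintype ι] [DecidableEq ι]
    (i : ι) (q f : ι → ℝ) (hq : ∀ j ≠ i, 0 ≤ q j) :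
    ∑ j ∈ univ.erase i, f j
      = ∑ j ∈ univ.filter (fun j ↦ j ≠ i ∧ 0 < q j), f j
        + ∑ j ∈ univ.filter (fun j ↦ j ≠ i ∧ q j = 0), f j := by
  rw [← filter_ne', ← sum_filter_add_sum_filter_not _ (fun j ↦ 0 < q j), filter_filter,
    filter_filter]
  congr 2
  refine filter_congr fun j _ ↦ and_congr_right fun hji ↦ ?_
  exact ⟨fun h ↦ le_antisymm (not_lt.1 h) (hq j hji), fun h ↦ h.not_gt⟩

/-- `ρ j` plays the joint inclusion probability of `i` and `j` (so `ρ i = π i`), and `q` the table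
`πᵢⱼ`, which only has to agree with it off the diagonal. -/
lemma ht_variance_row_le {ι : Type*} [Fintype ι] [DecidableEq ι] (i : ι) (π y ρ q : ι → ℝ)
    (hπ : ∀ j, π j ≠ 0) (hρi : ρ i = π i) (hρq : ∀ j ≠ i, ρ j = q j) (hq : ∀ j ≠ i, 0 ≤ q j) :
    ∑ j, (ρ j - π i * π j) * (y i / π i) * (y j / π j)
      ≤ π i * (1 - π i) * (y i / π i) ^ 2
        + ∑ j ∈ univ.filter (fun j ↦ j ≠ i ∧ 0 < q j),
            (q j - π i * π j) * (y i / π i) * (y j / π j)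
        + ∑ j ∈ univ.filter (fun j ↦ j ≠ i ∧ q j = 0), (y i ^ 2 / 2 + y j ^ 2 / 2) := by
  rw [← add_sum_erase _ _ (mem_univ i), sum_erase_eq_sum_filter_pos_add_sum_filter_zero i q _ hq,
    hρi, ← add_assoc]
  refine add_le_add (add_le_add (le_of_eq (by ring)) (le_of_eq (sum_congr rfl fun j hj ↦ ?_)))
    (sum_le_sum fun j hj ↦ ?_)
  · rw [hρq j (mem_filter.1 hj).2.1]
  · obtain ⟨hji, hqj⟩ := (mem_filter.1 hj).2
    have hterm : (ρ j - π i * π j) * (y i / π i) * (y j / π j) = -(y i * y j) := by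
      rw [hρq j hji, hqj]; field_simp [hπ i, hπ j]; ring
    rw [hterm]
    nlinarith [sq_nonneg (y i + y j)]

section Estimators

variable {Ω ι : Type*} [MeasurableSpace Ω] [Fintype ι] [DecidableEq ι]

noncomputable def htVarianceEstimator (A : ι → Set Ω) (y π : ι → ℝ) (πij : ι → ι → ℝ) (c : ℝ)
    (ω : Ω) : ℝ :=
  c * ∑ i, (A i).indicator (fun _ ↦ (1 : ℝ)) ω * (1 - π i) * (y i / π i) ^ 2
    + c * ∑ i, ∑ j ∈ univ.filter (fun j ↦ j ≠ i ∧ 0 < πij i j),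
        (A i ∩ A j).indicator (fun _ ↦ (1 : ℝ)) ω
          * ((πij i j - π i * π j) / πij i j) * (y i / π i) * (y j / π j)

noncomputable def htZeroPairCorrection (A : ι → Set Ω) (y π : ι → ℝ) (πij : ι → ι → ℝ) (c : ℝ)
    (ω : Ω) : ℝ :=
  c * ∑ i, ∑ j ∈ univ.filter (fun j ↦ j ≠ i ∧ πij i j = 0),
    ((A i).indicator (fun _ ↦ (1 : ℝ)) ω * y i ^ 2 / (2 * π i)
      + (A j).indicator (fun _ ↦ (1 : ℝ)) ω * y j ^ 2 / (2 * π j))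

variable {P : Measure Ω} [IsFiniteMeasure P] {A : ι → Set Ω} {y π : ι → ℝ} {πij : ι → ι → ℝ}

lemma integral_htVarianceEstimator_add_htZeroPairCorrection (hA : ∀ i, MeasurableSet (A i))
    (hπ : ∀ i, P.real (A i) = π i) (hπ0 : ∀ i, π i ≠ 0)
    (hπij : ∀ i j, i ≠ j → P.real (A i ∩ A j) = πij i j) (c : ℝ) :
    ∫ ω, (htVarianceEstimator A y π πij c ω + htZeroPairCorrection A y π πij c ω) ∂P
      = c * ∑ i, (π i * (1 - π i) * (y i / π i) ^ 2
          + ∑ j ∈ univ.filter (fun j ↦ j ≠ i ∧ 0 < πij i j),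
              (πij i j - π i * π j) * (y i / π i) * (y j / π j)
          + ∑ j ∈ univ.filter (fun j ↦ j ≠ i ∧ πij i j = 0), (y i ^ 2 / 2 + y j ^ 2 / 2)) := by
  have hAA : ∀ i j, MeasurableSet (A i ∩ A j) := fun i j ↦ (hA i).inter (hA j)
  simp only [htVarianceEstimator, htZeroPairCorrection]
  simp (disch := (try intro _ _); fun_prop (disch := first | exact hA _ | exact hAA _ _)) only
    [integral_add, integral_const_mul, integral_finsetSum, integral_mul_const, integral_div]
  simp only [integral_indicator_const _ (hA _), integral_indicator_const _ (hAA _ _), smul_eq_mul,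
    mul_one, hπ, ← mul_add, ← sum_add_distrib]
  congr 1
  refine sum_congr rfl fun i _ ↦ ?_
  congr 1
  · congr 1
    refine sum_congr rfl fun j hj ↦ ?_
    obtain ⟨hji, hπij_pos⟩ := (mem_filter.1 hj).2
    rw [hπij i j (Ne.symm hji)]
    field_simp [hπij_pos.ne']
  · refine sum_congr rfl fun j _ ↦ ?_
    field_simp [hπ0 i, hπ0 j]

end Estimators

theorem conservative_variance_estimator_general
    {Ω : Type*} [MeasurableSpace Ω] (P : Measure Ω) [IsProbabilityMeasure P]
    (N : ℕ)
    (A : Fin N → Set Ω) (hA : ∀ i, MeasurableSet (A i))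
    (y π : Fin N → ℝ) (πij : Fin N → Fin N → ℝ)
    (hπ : ∀ i, π i = (P (A i)).toReal) (hπpos : ∀ i, 0 < π i)
    (hπij : ∀ i j, i ≠ j → πij i j = (P (A i ∩ A j)).toReal)
    (Yhat Vhat Ahat : Ω → ℝ)
    (hY : Yhat = fun ω =>
      (1 / (N : ℝ)) * ∑ i, (A i).indicator (fun _ => (1 : ℝ)) ω * y i / π i)
    (hV : Vhat = fun ω =>
      (1 / (N : ℝ) ^ 2) * ∑ i, (A i).indicator (fun _ => (1 : ℝ)) ω
          * (1 - π i) * (y i / π i) ^ 2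
        + (1 / (N : ℝ) ^ 2) * ∑ i,
            ∑ j ∈ Finset.univ.filter (fun j => j ≠ i ∧ 0 < πij i j),
              (A i ∩ A j).indicator (fun _ => (1 : ℝ)) ω
                * ((πij i j - π i * π j) / πij i j) * (y i / π i) * (y j / π j))
    (hAhat : Ahat = fun ω =>
      (1 / (N : ℝ) ^ 2) * ∑ i,
        ∑ j ∈ Finset.univ.filter (fun j => j ≠ i ∧ πij i j = 0),
          ((A i).indicator (fun _ => (1 : ℝ)) ω * y i ^ 2 / (2 * π i)
            + (A j).indicator (fun _ => (1 : ℝ)) ω * y j ^ 2 / (2 * π j))) :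
    ∫ ω, (Vhat ω + Ahat ω) ∂P ≥ ∫ ω, (Yhat ω - ∫ x, Yhat x ∂P) ^ 2 ∂P := by
  have hπreal : ∀ i, P.real (A i) = π i := fun i ↦ (hπ i).symm
  have hπ0 : ∀ i, π i ≠ 0 := fun i ↦ (hπpos i).ne'
  have hπij_real : ∀ i j, i ≠ j → P.real (A i ∩ A j) = πij i j := fun i j h ↦ (hπij i j h).symm
  have hYsmul : Yhat = (1 / (N : ℝ)) • fun ω ↦ ∑ i, (A i).indicator 1 ω * (y i / π i) := by
    ext ω
    simp only [hY, Pi.smul_apply, smul_eq_mul, mul_div_assoc]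
    rfl
  rw [ge_iff_le, ← variance_eq_integral (by rw [hY]; fun_prop (disch := exact hA _)), hYsmul,
    variance_smul, variance_sum_indicator_mul hA,
    show Vhat = htVarianceEstimator A y π πij (1 / (N : ℝ) ^ 2) from hV,
    show Ahat = htZeroPairCorrection A y π πij (1 / (N : ℝ) ^ 2) from hAhat,
    integral_htVarianceEstimator_add_htZeroPairCorrection hA hπreal hπ0 hπij_real, one_div_pow]
  gcongr with i
  simp only [hπreal]
  refine ht_variance_row_le i π y (fun j ↦ P.real (A i ∩ A j)) (πij i) hπ0
    (by rw [Set.inter_self, hπreal]) (fun j hji ↦ hπij_real i j hji.symm)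
    fun j hji ↦ hπij_real i j hji.symm ▸ measureReal_nonneg

/-- **Conservative variance estimation.**
With `V̂` the Horvitz–Thompson variance estimator restricted to pairs with `π_{ij} > 0`
and `Â = (1/N²) ∑ᵢ ∑_{j≠i, π_{ij}=0} [1_{Aᵢ} yᵢ²/(2πᵢ) + 1_{Aⱼ} yⱼ²/(2πⱼ)]`,
the estimator `V̂ + Â` is conservative: `E[V̂ + Â] ≥ Var(Ŷ)`. -/
theorem conservative_variance_estimator
    {Ω : Type*} [MeasurableSpace Ω] (P : Measure Ω) [IsProbabilityMeasure P]
    (N : ℕ) (hN : 0 < N)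
    (A : Fin N → Set Ω) (hA : ∀ i, MeasurableSet (A i))
    (y π : Fin N → ℝ) (πij : Fin N → Fin N → ℝ)
    (hπ : ∀ i, π i = (P (A i)).toReal) (hπpos : ∀ i, 0 < π i)
    (hπij : ∀ i j, i ≠ j → πij i j = (P (A i ∩ A j)).toReal)
    (Yhat Vhat Ahat : Ω → ℝ)
    (hY : Yhat = fun ω =>
      (1 / (N : ℝ)) * ∑ i, (A i).indicator (fun _ => (1 : ℝ)) ω * y i / π i)
    (hV : Vhat = fun ω =>
      (1 / (N : ℝ) ^ 2) * ∑ i, (A i).indicator (fun _ => (1 : ℝ)) ω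
          * (1 - π i) * (y i / π i) ^ 2
        + (1 / (N : ℝ) ^ 2) * ∑ i,
            ∑ j ∈ Finset.univ.filter (fun j => j ≠ i ∧ 0 < πij i j),
              (A i ∩ A j).indicator (fun _ => (1 : ℝ)) ω
                * ((πij i j - π i * π j) / πij i j) * (y i / π i) * (y j / π j))
    (hAhat : Ahat = fun ω =>
      (1 / (N : ℝ) ^ 2) * ∑ i,
        ∑ j ∈ Finset.univ.filter (fun j => j ≠ i ∧ πij i j = 0),
          ((A i).indicator (fun _ => (1 : ℝ)) ω * y i ^ 2 / (2 * π i)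
            + (A j).indicator (fun _ => (1 : ℝ)) ω * y j ^ 2 / (2 * π j))) :
    ∫ ω, (Vhat ω + Ahat ω) ∂P ≥ ∫ ω, (Yhat ω - ∫ x, Yhat x ∂P) ^ 2 ∂P :=
  conservative_variance_estimator_general P N A hA y π πij hπ hπpos hπij Yhat Vhat Ahat hY hV hAhat
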